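/- arXiv:2208.01764 — 3 statements merged into one kernel-verified Lean document; each statement's English description precedes it below -/
import Mathlib

section
/- Product asymptotics. There exists a constant C > 0, depending only on σ, such that for every integer N ≥ 1, every partition 0 = x₀ < x₁ < ⋯ < x_N = 1 with mesh L = max_{1≤p≤N}(x_p − x_{p−1}), and all indices 0 ≤ ℓ ≤ m ≤ N: | ∏_{p=ℓ}^{m−1} (σ(x_{p+1}) + σ(x_p))/(2σ(x_p)) − √(σ(x_m)/σ(x_ℓ)) | ≤ C·L. -/
/-!
Write `g = log ∘ σ`, which is `C¹` and hence `K`-Lipschitz on `[0, 1]`. With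
`y = (g b - g a) / 2` one has `(σ b + σ a) / (2 σ a) = exp y * cosh y`, so the product telescopes
to `√(σ(x_m) / σ(x_ℓ)) * ∏ cosh y_p`. Since `1 ≤ cosh y ≤ exp (y² / 2)` and
`∑ y_p² ≤ K² L (x_m - x_ℓ) / 4`, the second factor lies between `1` and `exp (K² L / 8)`,
which is `1 + O(L)`.
-/

open Real
open scoped NNReal

lemma sqrt_div_eq_exp_log_sub_div_two {u v : ℝ} (hu : 0 < u) (hv : 0 < v) :
    √(v / u) = exp ((log v - log u) / 2) := by
  rw [sqrt_eq_rpow, rpow_def_of_pos (div_pos hv hu), log_div hv.ne' hu.ne']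
  ring_nf

lemma add_div_two_mul_eq_exp_mul_cosh {u v : ℝ} (hu : 0 < u) (hv : 0 < v) :
    (v + u) / (2 * u) = exp ((log v - log u) / 2) * cosh ((log v - log u) / 2) := by
  set y := (log v - log u) / 2
  have hexp_sq : exp y * exp y = v / u := by
    rw [← exp_add, show y + y = log v - log u by ring, exp_sub, exp_log hv, exp_log hu]
  calc (v + u) / (2 * u) = (v / u + 1) / 2 := by field_simp
    _ = (exp y * exp y + exp y * exp (-y)) / 2 := by
      rw [hexp_sq, ← exp_add, add_neg_cancel, exp_zero]
    _ = exp y * cosh y := by rw [cosh_eq]; ring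

lemma prod_add_div_two_mul_eq_exp_mul_prod_cosh {f : ℕ → ℝ} {ℓ m : ℕ} (hlm : ℓ ≤ m)
    (hf : ∀ p ∈ Finset.Icc ℓ m, 0 < f p) :
    ∏ p ∈ Finset.Ico ℓ m, (f (p + 1) + f p) / (2 * f p) =
      exp ((log (f m) - log (f ℓ)) / 2) *
        ∏ p ∈ Finset.Ico ℓ m, cosh ((log (f (p + 1)) - log (f p)) / 2) := by
  have hfactor : ∀ p ∈ Finset.Ico ℓ m, (f (p + 1) + f p) / (2 * f p) =
      exp ((log (f (p + 1)) - log (f p)) / 2) * cosh ((log (f (p + 1)) - log (f p)) / 2) := by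
    intro p hp
    obtain ⟨hℓp, hpm⟩ := Finset.mem_Ico.1 hp
    exact add_div_two_mul_eq_exp_mul_cosh (hf p (Finset.mem_Icc.2 ⟨hℓp, hpm.le⟩))
      (hf (p + 1) (Finset.mem_Icc.2 ⟨by omega, hpm⟩))
  rw [Finset.prod_congr rfl hfactor, Finset.prod_mul_distrib, ← exp_sum, ← Finset.sum_div,
    Finset.sum_Ico_sub (fun p => log (f p)) hlm]

lemma one_le_prod_cosh {ι : Type*} (s : Finset ι) (y : ι → ℝ) : 1 ≤ ∏ i ∈ s, cosh (y i) :=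
  Finset.one_le_prod fun i _ => one_le_cosh (y i)

lemma prod_cosh_le_exp_sum_sq_div_two {ι : Type*} (s : Finset ι) (y : ι → ℝ) :
    ∏ i ∈ s, cosh (y i) ≤ exp (∑ i ∈ s, y i ^ 2 / 2) := by
  rw [exp_sum]
  exact Finset.prod_le_prod (fun i _ => (cosh_pos _).le) fun i _ => cosh_le_exp_half_sq _

lemma exp_mul_sub_one_le {t : ℝ} (a : ℝ) (ht0 : 0 ≤ t) (ht1 : t ≤ 1) :
    exp (t * a) - 1 ≤ t * (exp a - 1) := by
  have := convexOn_exp.2 (Set.mem_univ 0) (Set.mem_univ a) (sub_nonneg.2 ht1) ht0 (by ring)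
  simp only [smul_eq_mul, mul_zero, zero_add, exp_zero, mul_one] at this
  linarith

lemma LipschitzOnWith.sub_le_of_mem_Icc_zero_one {g : ℝ → ℝ} {K : ℝ≥0}
    (hg : LipschitzOnWith K g (Set.Icc 0 1)) {a b : ℝ} (ha : a ∈ Set.Icc 0 1)
    (hb : b ∈ Set.Icc 0 1) : g a - g b ≤ K :=
  calc g a - g b ≤ dist (g a) (g b) := le_abs_self _
    _ ≤ K * dist a b := hg.dist_le_mul _ ha _ hb
    _ ≤ K := mul_le_of_le_one_right K.2 (Real.dist_le_of_mem_Icc_01 ha hb)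

section Partition

variable {N : ℕ} {x : ℕ → ℝ}

lemma mem_Icc_zero_one_of_le (hx0 : x 0 = 0) (hxN : x N = 1)
    (hstep : ∀ p < N, x p ≤ x (p + 1)) {p : ℕ} (hp : p ≤ N) : x p ∈ Set.Icc 0 1 := by
  have hmono : MonotoneOn x (Set.Iic N) :=
    monotoneOn_of_le_add_one Set.ordConnected_Iic fun q _ _ hq => hstep q hq
  exact ⟨hx0 ▸ hmono (Set.mem_Iic.2 (Nat.zero_le N)) hp (Nat.zero_le p),
    hxN ▸ hmono hp (Set.mem_Iic.2 le_rfl) hp⟩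

lemma sum_sq_sub_le_of_lipschitzOnWith {g : ℝ → ℝ} {K : ℝ≥0} {s : Set ℝ}
    (hg : LipschitzOnWith K g s) (hxs : ∀ p ≤ N, x p ∈ s) (hstep : ∀ p < N, x p ≤ x (p + 1))
    {L : ℝ} (hL : ∀ p < N, x (p + 1) - x p ≤ L) {ℓ m : ℕ} (hlm : ℓ ≤ m) (hmN : m ≤ N) :
    ∑ p ∈ Finset.Ico ℓ m, (g (x (p + 1)) - g (x p)) ^ 2 ≤ K ^ 2 * L * (x m - x ℓ) := by
  rw [← Finset.sum_Ico_sub x hlm, Finset.mul_sum]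
  refine Finset.sum_le_sum fun p hp => ?_
  have hpN : p < N := (Finset.mem_Ico.1 hp).2.trans_le hmN
  have hlip : |g (x (p + 1)) - g (x p)| ≤ K * (x (p + 1) - x p) := by
    simpa [Real.dist_eq, abs_of_nonneg (sub_nonneg.2 (hstep p hpN))] using
      hg.dist_le_mul _ (hxs _ hpN) _ (hxs _ hpN.le)
  calc (g (x (p + 1)) - g (x p)) ^ 2 ≤ (K * (x (p + 1) - x p)) ^ 2 :=
        sq_le_sq' (abs_le.1 hlip).1 (abs_le.1 hlip).2
    _ = K ^ 2 * (x (p + 1) - x p) * (x (p + 1) - x p) := by ring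
    _ ≤ K ^ 2 * L * (x (p + 1) - x p) := by
      gcongr
      · exact sub_nonneg.2 (hstep p hpN)
      · exact hL p hpN

lemma prod_cosh_le_one_add_mul_exp {g : ℝ → ℝ} {K : ℝ≥0} (hg : LipschitzOnWith K g (Set.Icc 0 1))
    (hxs : ∀ p ≤ N, x p ∈ Set.Icc 0 1) (hstep : ∀ p < N, x p ≤ x (p + 1)) {L : ℝ}
    (hL : ∀ p < N, x (p + 1) - x p ≤ L) (hL0 : 0 ≤ L) (hL1 : L ≤ 1) {ℓ m : ℕ} (hlm : ℓ ≤ m)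
    (hmN : m ≤ N) :
    ∏ p ∈ Finset.Ico ℓ m, cosh ((g (x (p + 1)) - g (x p)) / 2) ≤ 1 + L * exp (K ^ 2 / 8) := by
  have hsum : ∑ p ∈ Finset.Ico ℓ m, ((g (x (p + 1)) - g (x p)) / 2) ^ 2 / 2 ≤ L * (K ^ 2 / 8) :=
    calc _ = (∑ p ∈ Finset.Ico ℓ m, (g (x (p + 1)) - g (x p)) ^ 2) / 8 := by
          rw [Finset.sum_div]; exact Finset.sum_congr rfl fun p _ => by ring
      _ ≤ K ^ 2 * L * (x m - x ℓ) / 8 := by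
          gcongr; exact sum_sq_sub_le_of_lipschitzOnWith hg hxs hstep hL hlm hmN
      _ ≤ L * (K ^ 2 / 8) := by
          have : x m - x ℓ ≤ 1 := by linarith [(hxs m hmN).2, (hxs ℓ (hlm.trans hmN)).1]
          nlinarith [mul_nonneg (sq_nonneg (K : ℝ)) hL0]
  calc _ ≤ exp (L * (K ^ 2 / 8)) :=
        (prod_cosh_le_exp_sum_sq_div_two _ _).trans (exp_le_exp.2 hsum)
    _ ≤ 1 + L * (exp (K ^ 2 / 8) - 1) := by linarith [exp_mul_sub_one_le (K ^ 2 / 8) hL0 hL1]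
    _ ≤ 1 + L * exp (K ^ 2 / 8) := by linarith

end Partition

/-- Product asymptotics. For partitions `0 = x₀ < ⋯ < x_N = 1` with mesh `L`,
`∏_{p=ℓ}^{m-1} (σ(x_{p+1}) + σ(x_p))/(2σ(x_p)) = √(σ(x_m)/σ(x_ℓ)) + O(L)`,
uniformly, with a constant depending only on `σ`. -/
theorem stmt_8 (σ : ℝ → ℝ)
    (hσ : ContDiffOn ℝ 2 σ (Set.Icc 0 1))
    (hσpos : ∀ x ∈ Set.Icc (0 : ℝ) 1, 0 < σ x) :
    ∃ C : ℝ, 0 < C ∧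
      ∀ (N : ℕ), ∀ hN : 1 ≤ N, ∀ x : ℕ → ℝ,
        x 0 = 0 → x N = 1 → (∀ p < N, x p < x (p + 1)) →
        ∀ ℓ m : ℕ, ℓ ≤ m → m ≤ N →
          |(∏ p ∈ Finset.Ico ℓ m, (σ (x (p + 1)) + σ (x p)) / (2 * σ (x p))) -
              Real.sqrt (σ (x m) / σ (x ℓ))| ≤
            C * (Finset.range N).sup'
              (Finset.nonempty_range_iff.mpr (by omega)) (fun p => x (p + 1) - x p) := by
  obtain ⟨K, hK⟩ := (hσ.log fun y hy => (hσpos y hy).ne').exists_lipschitzOnWith two_ne_zero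
    (convex_Icc 0 1) isCompact_Icc
  refine ⟨exp (K / 2) * exp (K ^ 2 / 8), by positivity, ?_⟩
  intro N hN x hx0 hxN hstep ℓ m hlm hmN
  set L := (Finset.range N).sup' (Finset.nonempty_range_iff.mpr (by omega))
    (fun p => x (p + 1) - x p)
  have hxI : ∀ p ≤ N, x p ∈ Set.Icc 0 1 :=
    fun p => mem_Icc_zero_one_of_le hx0 hxN fun q hq => (hstep q hq).le
  have hLstep : ∀ p < N, x (p + 1) - x p ≤ L :=
    fun p hp => Finset.le_sup' (fun p => x (p + 1) - x p) (Finset.mem_range.2 hp)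
  have hL0 : 0 ≤ L := (sub_nonneg.2 (hstep 0 hN).le).trans (hLstep 0 hN)
  have hL1 : L ≤ 1 := Finset.sup'_le _ _ fun p hp => by
    have hp := Finset.mem_range.1 hp
    linarith [(hxI (p + 1) hp).2, (hxI p hp.le).1]
  have hσx : ∀ p ∈ Finset.Icc ℓ m, 0 < σ (x p) :=
    fun p hp => hσpos _ (hxI p ((Finset.mem_Icc.1 hp).2.trans hmN))
  have hlog : log (σ (x m)) - log (σ (x ℓ)) ≤ K :=
    hK.sub_le_of_mem_Icc_zero_one (hxI m hmN) (hxI ℓ (hlm.trans hmN))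
  have hQ := prod_cosh_le_one_add_mul_exp hK hxI (fun q hq => (hstep q hq).le) hLstep hL0 hL1
    hlm hmN
  rw [prod_add_div_two_mul_eq_exp_mul_prod_cosh hlm hσx,
    sqrt_div_eq_exp_log_sub_div_two (hσx ℓ (by simp [hlm])) (hσx m (by simp [hlm])),
    ← mul_sub_one, abs_of_nonneg (mul_nonneg (exp_pos _).le (sub_nonneg.2 (one_le_prod_cosh _ _)))]
  calc _ ≤ exp (K / 2) * (L * exp (K ^ 2 / 8)) :=
        mul_le_mul (exp_le_exp.2 (by linarith)) (by linarith) (sub_nonneg.2 (one_le_prod_cosh _ _))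
          (exp_pos _).le
    _ = exp (K / 2) * exp (K ^ 2 / 8) * L := by ring
end

section
/- Switch-location identity. For any integer N ≥ 1, any positive real numbers σ₁, …, σ_N and Δx₁, …, Δx_N, and any k ∈ ℂ: ∑_{ℓ ∈ {0,1}^N, ℓ₁ = 0} ( ∏_{p=1}^{N−1} (σ_{p+1} + (−1)^{ℓ_p + ℓ_{p+1}} σ_p)/(σ_{p+1} + σ_p) ) · sin( k ∑_{p=1}^{N} (−1)^{ℓ_p} Δx_p/σ_p ) = ∑_{n=0}^{N−1} ∑_{0 = s₀ < s₁ < ⋯ < s_n < s_{n+1} = N} ( ∏_{p=1}^{n} (σ_{s_p+1} − σ_{s_p})/(σ_{s_p+1} + σ_{s_p}) ) · sin( k ∑_{p=0}^{n} (−1)^p ∑_{r=s_p+1}^{s_{p+1}} Δx_r/σ_r ), where the inner sum on the right is over integer tuples (s₁,…,s_n) with 1 ≤ s₁ < s₂ < ⋯ < s_n ≤ N−1. -/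
open MeasureTheory Filter

noncomputable section

/-- Read off the entry `ℓ_p` (for `1 ≤ p ≤ N`) of a binary vector `ℓ ∈ {0,1}^N`,
encoded as `ℓ : Fin N → Bool`; out-of-range indices give `false`. -/
def entry (N : ℕ) (ℓ : Fin N → Bool) (p : ℕ) : Bool :=
  if h : 1 ≤ p ∧ p ≤ N then ℓ ⟨p - 1, by omega⟩ else false

/-- The binary vector associated to a set of switch locations. -/
def toL (N : ℕ) (s : Finset ℕ) : Fin N → Bool :=
  fun i => (s.filter (· ≤ (i : ℕ))).card % 2 == 1

lemma entry_in_range (N : ℕ) (ℓ : Fin N → Bool) (p : ℕ) (h1 : 1 ≤ p) (h2 : p ≤ N) :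
    entry N ℓ p = ℓ ⟨p - 1, by omega⟩ := by
  simp [entry, h1, h2]

lemma card_filter_lt_succ (s : Finset ℕ) (p : ℕ) :
    (s.filter (· < p + 1)).card = (s.filter (· < p)).card + (if p ∈ s then 1 else 0) := by
  have h : s.filter (· < p + 1) = (s.filter (· < p)) ∪ (s.filter (· = p)) := by
    ext x
    simp only [Finset.mem_filter, Finset.mem_union]
    constructor
    · rintro ⟨hx, hlt⟩
      rcases Nat.lt_or_ge x p with h' | h'
      · exact Or.inl ⟨hx, h'⟩
      · exact Or.inr ⟨hx, by omega⟩
    · rintro (⟨hx, h'⟩ | ⟨hx, h'⟩) <;> exact ⟨hx, by omega⟩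
  rw [h, Finset.card_union_of_disjoint, Finset.filter_eq']
  · by_cases hp : p ∈ s <;> simp [hp]
  · rw [Finset.disjoint_left]
    intro a ha hb
    simp only [Finset.mem_filter] at ha hb
    omega

lemma entry_toL (N : ℕ) (s : Finset ℕ) (p : ℕ) (h1 : 1 ≤ p) (h2 : p ≤ N) :
    entry N (toL N s) p = ((s.filter (· < p)).card % 2 == 1) := by
  rw [entry_in_range N _ p h1 h2]
  show ((s.filter (· ≤ (p - 1 : ℕ))).card % 2 == 1) = _
  have hf : s.filter (· ≤ (p - 1 : ℕ)) = s.filter (· < p) := by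
    apply Finset.filter_congr
    intro x _
    omega
  rw [hf]

lemma entry_toL_ne_iff (N : ℕ) (s : Finset ℕ) (p : ℕ) (h1 : 1 ≤ p) (h2 : p + 1 ≤ N) :
    (entry N (toL N s) p ≠ entry N (toL N s) (p + 1)) ↔ p ∈ s := by
  rw [entry_toL N s p h1 (by omega), entry_toL N s (p + 1) (by omega) h2,
    card_filter_lt_succ]
  by_cases hp : p ∈ s
  · simp only [hp, if_true, iff_true]
    rcases Nat.mod_two_eq_zero_or_one (s.filter (· < p)).card with h | h <;>
      simp [Nat.add_mod, h]
  · simp [hp]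

/-- switch-location identity. The sum over binary vectors `ℓ ∈ {0,1}^N`
with `ℓ₁ = 0` is re-indexed by the set `s = {s₁ < ⋯ < s_n} ⊆ {1,…,N−1}` of locations at
which consecutive entries of `ℓ` switch value; for `s_p < r ≤ s_{p+1}` the sign
`(−1)^{ℓ_r} = (−1)^p` is recorded as `(−1)^{#{s ∈ s : s < r}}`. -/
theorem stmt_11 (N : ℕ) (hN : 1 ≤ N) (σs dx : ℕ → ℝ)
    (hσs : ∀ p, 1 ≤ p → p ≤ N → 0 < σs p)
    (hdx : ∀ p, 1 ≤ p → p ≤ N → 0 < dx p) (k : ℂ) :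
    (∑ ℓ : Fin N → Bool,
      if entry N ℓ 1 = false then
        ((∏ p ∈ Finset.Ico 1 N,
            (σs (p + 1) + (if entry N ℓ p = entry N ℓ (p + 1) then σs p else -σs p)) /
              (σs (p + 1) + σs p) : ℝ) : ℂ) *
          Complex.sin (k * ((∑ p ∈ Finset.Icc 1 N,
            (if entry N ℓ p then (-1 : ℝ) else 1) * dx p / σs p : ℝ) : ℂ))
      else 0) =
    ∑ n ∈ Finset.range N, ∑ s ∈ (Finset.Icc 1 (N - 1)).powersetCard n,
      ((∏ i ∈ s, (σs (i + 1) - σs i) / (σs (i + 1) + σs i) : ℝ) : ℂ) *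
        Complex.sin (k * ((∑ r ∈ Finset.Icc 1 N,
          (-1 : ℝ) ^ (s.filter (· < r)).card * dx r / σs r : ℝ) : ℂ)) := by
  -- turn the RHS into a sum over the powerset
  have hcard : (Finset.Icc 1 (N - 1)).card = N - 1 := by
    rw [Nat.card_Icc]; omega
  rw [show Finset.range N = Finset.range ((Finset.Icc 1 (N - 1)).card + 1) by
    rw [hcard]; congr 1; omega, ← Finset.sum_powerset]
  -- turn the LHS into a filtered sum
  rw [← Finset.sum_filter]
  symm
  refine Finset.sum_nbij' (toL N)
    (fun ℓ => (Finset.Icc 1 (N - 1)).filter (fun p => entry N ℓ p ≠ entry N ℓ (p + 1)))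
    ?_ ?_ ?_ ?_ ?_
  · -- toL s lands in the filter
    intro s hs
    simp only [Finset.mem_filter, Finset.mem_univ, true_and]
    rw [entry_toL N s 1 le_rfl hN]
    have h0 : (s.filter (· < 1)).card = 0 := by
      rw [Finset.card_eq_zero, Finset.filter_eq_empty_iff]
      intro x hx
      rw [Finset.mem_powerset] at hs
      have := hs hx
      simp only [Finset.mem_Icc] at this
      omega
    rw [h0]
    rfl
  · -- the switch set lands in the powerset
    intro ℓ _
    rw [Finset.mem_powerset]
    exact Finset.filter_subset _ _
  · -- left inverse
    intro s hs
    rw [Finset.mem_powerset] at hs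
    ext p
    simp only [Finset.mem_filter, Finset.mem_Icc]
    constructor
    · rintro ⟨⟨h1, h2⟩, hne⟩
      exact (entry_toL_ne_iff N s p h1 (by omega)).1 hne
    · intro hp
      have hm := hs hp
      simp only [Finset.mem_Icc] at hm
      exact ⟨hm, (entry_toL_ne_iff N s p hm.1 (by omega)).2 hp⟩
  · -- right inverse
    intro ℓ hℓ
    simp only [Finset.mem_filter, Finset.mem_univ, true_and] at hℓ
    set S := (Finset.Icc 1 (N - 1)).filter (fun p => entry N ℓ p ≠ entry N ℓ (p + 1)) with hS
    have hSsub : ∀ x ∈ S, 1 ≤ x ∧ x ≤ N - 1 := by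
      intro x hx
      rw [hS, Finset.mem_filter, Finset.mem_Icc] at hx
      exact hx.1
    funext i
    obtain ⟨m, hm⟩ := i
    induction m with
    | zero =>
      have h0 : ℓ ⟨0, hm⟩ = false := by
        rw [entry_in_range N ℓ 1 le_rfl hN] at hℓ
        exact hℓ
      have hfe : S.filter (· ≤ (0 : ℕ)) = ∅ := by
        rw [Finset.filter_eq_empty_iff]
        intro x hx
        have := hSsub x hx
        omega
      show ((S.filter (· ≤ (0 : ℕ))).card % 2 == 1) = ℓ ⟨0, hm⟩
      rw [hfe, h0]
      rfl
    | succ m ih =>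
      have hm' : m < N := by omega
      have hih := ih hm'
      have hstep : (S.filter (· ≤ m + 1)).card
          = (S.filter (· ≤ m)).card + (if m + 1 ∈ S then 1 else 0) := by
        have e1 : S.filter (· ≤ m + 1) = S.filter (· < m + 2) := by
          apply Finset.filter_congr; intro x _
          omega
        have e2 : S.filter (· ≤ m) = S.filter (· < m + 1) := by
          apply Finset.filter_congr; intro x _
          omega
        rw [e1, e2, card_filter_lt_succ]
      have hmemS : (m + 1 ∈ S) ↔ (ℓ ⟨m, hm'⟩ ≠ ℓ ⟨m + 1, hm⟩) := by
        rw [hS, Finset.mem_filter, Finset.mem_Icc]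
        rw [entry_in_range N ℓ (m + 1) (by omega) (by omega),
          entry_in_range N ℓ (m + 2) (by omega) (by omega)]
        constructor
        · rintro ⟨_, h⟩; exact h
        · intro h; refine ⟨⟨by omega, by omega⟩, h⟩
      show ((S.filter (· ≤ m + 1)).card % 2 == 1) = ℓ ⟨m + 1, hm⟩
      have hihv : ((S.filter (· ≤ m)).card % 2 == 1) = ℓ ⟨m, hm'⟩ := hih
      by_cases hcase : ℓ ⟨m, hm'⟩ = ℓ ⟨m + 1, hm⟩
      · have hnot : m + 1 ∉ S := by rw [hmemS]; simp [hcase]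
        rw [hstep, if_neg hnot, Nat.add_zero, hihv, hcase]
      · have hmem : m + 1 ∈ S := hmemS.2 hcase
        have hb2 : ℓ ⟨m + 1, hm⟩ = !ℓ ⟨m, hm'⟩ := by
          cases h1 : ℓ ⟨m, hm'⟩ <;> cases h2 : ℓ ⟨m + 1, hm⟩ <;>
            first
            | rfl
            | (exfalso; rw [h1, h2] at hcase; exact hcase rfl)
        rw [hstep, if_pos hmem, hb2, ← hihv]
        rcases Nat.mod_two_eq_zero_or_one (S.filter (· ≤ m)).card with h | h <;>
          simp [Nat.add_mod, h]
  · -- values agree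
    intro s hs
    rw [Finset.mem_powerset] at hs
    congr 1
    · -- products agree
      norm_cast
      have key : ∀ p ∈ Finset.Ico 1 N,
          (σs (p + 1) + (if entry N (toL N s) p = entry N (toL N s) (p + 1)
              then σs p else -σs p)) / (σs (p + 1) + σs p)
          = (if p ∈ s then (σs (p + 1) - σs p) / (σs (p + 1) + σs p) else 1) := by
        intro p hp
        rw [Finset.mem_Ico] at hp
        have hne := entry_toL_ne_iff N s p hp.1 (by omega)
        have hden : σs (p + 1) + σs p ≠ 0 := by
          have := hσs p hp.1 (by omega)
          have := hσs (p + 1) (by omega) (by omega)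
          positivity
        by_cases hmem : p ∈ s
        · have : ¬ (entry N (toL N s) p = entry N (toL N s) (p + 1)) := by
            intro h; exact absurd (hne.2 hmem) (by simp [h])
          rw [if_neg this, if_pos hmem]
          ring_nf
        · have : entry N (toL N s) p = entry N (toL N s) (p + 1) := by
            by_contra h; exact hmem (hne.1 h)
          rw [if_pos this, if_neg hmem, div_self hden]
      rw [Finset.prod_congr rfl key, Finset.prod_ite_mem,
        Finset.inter_eq_right.2 (fun x hx => by
          have := hs hx; rw [Finset.mem_Icc] at this; rw [Finset.mem_Ico]; omega)]
    · -- sine arguments agree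
      have hsum : (∑ p ∈ Finset.Icc 1 N,
            (if entry N (toL N s) p then (-1 : ℝ) else 1) * dx p / σs p)
          = ∑ r ∈ Finset.Icc 1 N,
            (-1 : ℝ) ^ ((s.filter (· < r)).card) * dx r / σs r := by
        apply Finset.sum_congr rfl
        intro p hp
        rw [Finset.mem_Icc] at hp
        rw [entry_toL N s p hp.1 hp.2]
        by_cases h : (s.filter (· < p)).card % 2 = 1
        · rw [if_pos (by simp [h]), (Nat.odd_iff.2 h).neg_one_pow]
        · have h0 : (s.filter (· < p)).card % 2 = 0 := by omega
          rw [if_neg (by simp [h0]), (Nat.even_iff.2 h0).neg_one_pow]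
      rw [hsum]
end
end

section
/- Global relation for the constant-coefficient heat equation. Let σ₀ > 0, a < b, T > 0, and let q : [a,b] × [0,T] → ℝ be continuous, twice continuously differentiable in x and once in t on the closed rectangle, with q_t(x,t) = σ₀² q_{xx}(x,t) for all (x,t) ∈ [a,b] × [0,T]. Then for every k ∈ ℂ and every t ∈ [0,T]: e^{σ₀²k²t} ∫_a^b e^{−iky} q(y,t) dy = ∫_a^b e^{−iky} q(y,0) dy + σ₀² e^{−ikb} ∫_0^t e^{σ₀²k²s} ( q_x(b,s) + ik·q(b,s) ) ds − σ₀² e^{−ika} ∫_0^t e^{σ₀²k²s} ( q_x(a,s) + ik·q(a,s) ) ds. -/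
/-!
Let `P s = ∫_a^b e^{-iky} q(y,s) dy`. Differentiating under the integral sign, using the heat
equation and integrating by parts twice in `y` gives
`P' = σ₀² [e^{-iky} (q_x + ik q)]_{y=a}^{y=b} - σ₀² k² P`,
so the derivative of `e^{σ₀²k²s} P(s)` consists of boundary terms only; integrating it over
`[0, t]` gives the global relation.
-/

open MeasureTheory Filter Set Function Complex
open scoped Interval

section ParametricIntegral

variable {E : Type*} [NormedAddCommGroup E] [NormedSpace ℝ E] {F F' : ℝ → ℝ → E} {a b : ℝ}
  {K : Set ℝ}

theorem continuousOn_intervalIntegral_of_continuousOn_uIcc_prod (hK : IsCompact K)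
    (hF : ContinuousOn (uncurry F) ([[a, b]] ×ˢ K)) :
    ContinuousOn (fun s => ∫ y in a..b, F y s) K := by
  intro s₀ hs₀
  obtain ⟨M, hM⟩ := (isCompact_uIcc.prod hK).exists_bound_of_continuousOn hF
  refine intervalIntegral.continuousWithinAt_of_dominated_interval (bound := fun _ => M)
    ?_ ?_ intervalIntegrable_const ?_
  · filter_upwards [self_mem_nhdsWithin] with s hs
    exact ((hF.uncurry_right s hs).mono uIoc_subset_uIcc).aestronglyMeasurable measurableSet_uIoc
  · filter_upwards [self_mem_nhdsWithin] with s hs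
    exact ae_of_all _ fun y hy => hM (y, s) ⟨uIoc_subset_uIcc hy, hs⟩
  · exact ae_of_all _ fun y hy => hF.uncurry_left y (uIoc_subset_uIcc hy) s₀ hs₀

theorem hasDerivAt_intervalIntegral_of_continuousOn_uIcc_prod {s₀ : ℝ} (hK : IsCompact K)
    (hs₀ : s₀ ∈ interior K) (hF : ∀ s ∈ K, ContinuousOn (fun y => F y s) [[a, b]])
    (hF' : ContinuousOn (uncurry F') ([[a, b]] ×ˢ K))
    (hderiv : ∀ y ∈ [[a, b]], ∀ s ∈ K, HasDerivWithinAt (F y) (F' y s) K s) :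
    HasDerivAt (fun s => ∫ y in a..b, F y s) (∫ y in a..b, F' y s₀) s₀ := by
  obtain ⟨M, hM⟩ := (isCompact_uIcc.prod hK).exists_bound_of_continuousOn hF'
  have hmeas : ∀ {f : ℝ → E}, ContinuousOn f [[a, b]] →
      AEStronglyMeasurable f (volume.restrict (Ι a b)) := fun hf =>
    (hf.mono uIoc_subset_uIcc).aestronglyMeasurable measurableSet_uIoc
  have hs₀K : s₀ ∈ K := interior_subset hs₀
  refine (intervalIntegral.hasDerivAt_integral_of_dominated_loc_of_deriv_le
    (F := fun s y => F y s) (F' := fun s y => F' y s) (bound := fun _ => M)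
    (isOpen_interior.mem_nhds hs₀) ?_ (hF s₀ hs₀K).intervalIntegrable
    (hmeas (hF'.uncurry_right s₀ hs₀K)) ?_ intervalIntegrable_const ?_).2
  · filter_upwards [isOpen_interior.mem_nhds hs₀] with s hs
    exact hmeas (hF s (interior_subset hs))
  · exact ae_of_all _ fun y hy s hs => hM (y, s) ⟨uIoc_subset_uIcc hy, interior_subset hs⟩
  · exact ae_of_all _ fun y hy s hs => (hderiv y (uIoc_subset_uIcc hy) s
      (interior_subset hs)).hasDerivAt (mem_interior_iff_mem_nhds.mp hs)

end ParametricIntegral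

theorem hasDerivAt_cexp_mul_ofReal (c : ℂ) (s : ℝ) :
    HasDerivAt (fun s : ℝ => cexp (c * s)) (cexp (c * s) * c) s := by
  simpa using ((hasDerivAt_id s).ofReal_comp.const_mul c).cexp

theorem integral_cexp_mul_eq_of_hasDerivAt {P G : ℝ → ℂ} {c : ℂ} {a b : ℝ} (hab : a ≤ b)
    (hP : ContinuousOn P (Icc a b)) (hP' : ∀ s ∈ Ioo a b, HasDerivAt P (G s - c * P s) s)
    (hG : IntervalIntegrable G volume a b) :
    ∫ s in a..b, cexp (c * s) * G s = cexp (c * b) * P b - cexp (c * a) * P a := by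
  have hexp : Continuous fun s : ℝ => cexp (c * s) := by fun_prop
  refine intervalIntegral.integral_eq_sub_of_hasDerivAt_of_le hab (hexp.continuousOn.mul hP)
    (fun s hs => ?_) (hG.continuousOn_mul hexp.continuousOn)
  exact ((hasDerivAt_cexp_mul_ofReal c s).mul (hP' s hs)).congr_deriv (by ring)

theorem integral_cexp_mul_second_deriv {u u' u'' : ℝ → ℂ} {a b : ℝ} (k : ℂ) (hab : a ≤ b)
    (hu : ∀ y ∈ Icc a b, HasDerivWithinAt u (u' y) (Icc a b) y)
    (hu' : ∀ y ∈ Icc a b, HasDerivWithinAt u' (u'' y) (Icc a b) y)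
    (hu'' : ContinuousOn u'' (Icc a b)) :
    ∫ y in a..b, cexp (-I * k * y) * u'' y =
      cexp (-I * k * b) * (u' b + I * k * u b) - cexp (-I * k * a) * (u' a + I * k * u a) -
        k ^ 2 * ∫ y in a..b, cexp (-I * k * y) * u y := by
  set e : ℝ → ℂ := fun y => cexp (-I * k * y)
  have he : Continuous e := by fun_prop
  have hcont : ContinuousOn u (Icc a b) := fun y hy => (hu y hy).continuousWithinAt
  have hcont' : ContinuousOn u' (Icc a b) := fun y hy => (hu' y hy).continuousWithinAt
  -- `e' = -ik e`, so `e (u' + ik u)` is a primitive of `e (u'' + k² u)`.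
  have hderiv : ∀ y ∈ Ioo a b, HasDerivAt (fun y => e y * (u' y + I * k * u y))
      (e y * u'' y + k ^ 2 * (e y * u y)) y := by
    intro y hy
    have hIcc : Icc a b ∈ nhds y := Icc_mem_nhds hy.1 hy.2
    have hy' := Ioo_subset_Icc_self hy
    refine ((hasDerivAt_cexp_mul_ofReal (-I * k) y).mul (((hu' y hy').hasDerivAt hIcc).add
      (((hu y hy').hasDerivAt hIcc).const_mul (I * k)))).congr_deriv ?_
    simp only [Pi.add_apply]
    linear_combination (-(e y * k ^ 2 * u y)) * I_sq
  have hint : ∀ {f : ℝ → ℂ}, ContinuousOn f (Icc a b) →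
      IntervalIntegrable (fun y => e y * f y) volume a b := fun hf =>
    (he.continuousOn.mul hf).intervalIntegrable_of_Icc hab
  have hFTC := intervalIntegral.integral_eq_sub_of_hasDerivAt_of_le hab
    (he.continuousOn.mul (hcont'.add (continuousOn_const.mul hcont))) hderiv
    ((hint hu'').add ((hint hcont).const_mul _))
  rw [intervalIntegral.integral_add (hint hu'') ((hint hcont).const_mul _),
    intervalIntegral.integral_const_mul] at hFTC
  simp only [Pi.add_apply, Pi.mul_apply] at hFTC
  linear_combination hFTC

theorem ContinuousOn.cexp_mul_ofReal_uncurry {r : ℝ → ℝ → ℝ} {S : Set (ℝ × ℝ)} (k : ℂ)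
    (hr : ContinuousOn (uncurry r) S) :
    ContinuousOn (uncurry fun (y s : ℝ) => cexp (-I * k * y) * r y s) S :=
  (by fun_prop : Continuous fun p : ℝ × ℝ => cexp (-I * k * p.1)).continuousOn.mul
    (continuous_ofReal.comp_continuousOn hr)

theorem hasDerivAt_integral_cexp_mul_of_heat {σ₀ a b T s : ℝ} {q qx qxx qt : ℝ → ℝ → ℝ}
    (k : ℂ) (hab : a ≤ b) (hs : s ∈ Ioo 0 T)
    (hcont : ContinuousOn (uncurry q) (Icc a b ×ˢ Icc 0 T))
    (hqx : ∀ x ∈ Icc a b, ∀ t ∈ Icc 0 T, HasDerivWithinAt (q · t) (qx x t) (Icc a b) x)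
    (hqxx : ∀ x ∈ Icc a b, ∀ t ∈ Icc 0 T, HasDerivWithinAt (qx · t) (qxx x t) (Icc a b) x)
    (hcontxx : ContinuousOn (uncurry qxx) (Icc a b ×ˢ Icc 0 T))
    (hqt : ∀ x ∈ Icc a b, ∀ t ∈ Icc 0 T, HasDerivWithinAt (q x) (qt x t) (Icc 0 T) t)
    (hpde : ∀ x ∈ Icc a b, ∀ t ∈ Icc 0 T, qt x t = σ₀ ^ 2 * qxx x t) :
    HasDerivAt (fun s => ∫ y in a..b, cexp (-I * k * y) * q y s)
      (σ₀ ^ 2 * (cexp (-I * k * b) * (qx b s + I * k * q b s) -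
          cexp (-I * k * a) * (qx a s + I * k * q a s)) -
        σ₀ ^ 2 * k ^ 2 * ∫ y in a..b, cexp (-I * k * y) * q y s) s := by
  have hs' := Ioo_subset_Icc_self hs
  have hI : [[a, b]] = Icc a b := uIcc_of_le hab
  have h := hasDerivAt_intervalIntegral_of_continuousOn_uIcc_prod
    (F := fun y s => cexp (-I * k * y) * q y s)
    (F' := fun y s => (σ₀ : ℂ) ^ 2 * (cexp (-I * k * y) * qxx y s)) isCompact_Icc
    (by rwa [interior_Icc]) (fun s hs => (hI ▸ hcont.cexp_mul_ofReal_uncurry k).uncurry_right s hs)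
    ((continuousOn_const.mul (hI ▸ hcontxx.cexp_mul_ofReal_uncurry k)).congr fun _ _ => rfl)
    fun y hy s hs => by
      rw [hI] at hy
      refine ((hqt y hy s hs).ofReal_comp.const_mul _).congr_deriv ?_
      rw [hpde y hy s hs]
      push_cast
      ring
  rw [intervalIntegral.integral_const_mul, integral_cexp_mul_second_deriv k hab
    (fun y hy => (hqx y hy s hs').ofReal_comp) (fun y hy => (hqxx y hy s hs').ofReal_comp)
    (continuous_ofReal.comp_continuousOn (hcontxx.uncurry_right s hs'))] at h
  exact h.congr_deriv (by ring)

theorem stmt_13_general (σ₀ a b T : ℝ) (hab : a < b)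
    (q qx qxx qt : ℝ → ℝ → ℝ)
    -- q is continuous on the closed rectangle
    (hcont : ContinuousOn (fun p : ℝ × ℝ => q p.1 p.2) (Set.Icc a b ×ˢ Set.Icc 0 T))
    -- q is twice continuously differentiable in x on the closed rectangle
    (hqx : ∀ x ∈ Set.Icc a b, ∀ t ∈ Set.Icc 0 T,
      HasDerivWithinAt (fun x' => q x' t) (qx x t) (Set.Icc a b) x)
    (hqxx : ∀ x ∈ Set.Icc a b, ∀ t ∈ Set.Icc 0 T,
      HasDerivWithinAt (fun x' => qx x' t) (qxx x t) (Set.Icc a b) x)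
    (hcontx : ContinuousOn (fun p : ℝ × ℝ => qx p.1 p.2) (Set.Icc a b ×ˢ Set.Icc 0 T))
    (hcontxx : ContinuousOn (fun p : ℝ × ℝ => qxx p.1 p.2) (Set.Icc a b ×ˢ Set.Icc 0 T))
    -- q is once continuously differentiable in t on the closed rectangle
    (hqt : ∀ x ∈ Set.Icc a b, ∀ t ∈ Set.Icc 0 T,
      HasDerivWithinAt (fun t' => q x t') (qt x t) (Set.Icc 0 T) t)
    -- the heat equation
    (hpde : ∀ x ∈ Set.Icc a b, ∀ t ∈ Set.Icc 0 T, qt x t = σ₀ ^ 2 * qxx x t)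
    (k : ℂ) (t : ℝ) (ht : t ∈ Set.Icc 0 T) :
    Complex.exp ((σ₀ : ℂ) ^ 2 * k ^ 2 * (t : ℂ)) *
        ∫ y in a..b, Complex.exp (-Complex.I * k * (y : ℂ)) * ((q y t : ℝ) : ℂ) =
      (∫ y in a..b, Complex.exp (-Complex.I * k * (y : ℂ)) * ((q y 0 : ℝ) : ℂ)) +
        (σ₀ : ℂ) ^ 2 * Complex.exp (-Complex.I * k * (b : ℂ)) *
          (∫ s in (0 : ℝ)..t, Complex.exp ((σ₀ : ℂ) ^ 2 * k ^ 2 * (s : ℂ)) *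
            (((qx b s : ℝ) : ℂ) + Complex.I * k * ((q b s : ℝ) : ℂ))) -
        (σ₀ : ℂ) ^ 2 * Complex.exp (-Complex.I * k * (a : ℂ)) *
          ∫ s in (0 : ℝ)..t, Complex.exp ((σ₀ : ℂ) ^ 2 * k ^ 2 * (s : ℂ)) *
            (((qx a s : ℝ) : ℂ) + Complex.I * k * ((q a s : ℝ) : ℂ)) := by
  have hIcc : Icc 0 t ⊆ Icc 0 T := Icc_subset_Icc_right ht.2
  have hP : ContinuousOn (fun s => ∫ y in a..b, cexp (-I * k * y) * q y s) (Icc 0 t) :=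
    (continuousOn_intervalIntegral_of_continuousOn_uIcc_prod isCompact_Icc
      (uIcc_of_le hab.le ▸ hcont.cexp_mul_ofReal_uncurry k)).mono hIcc
  have hflux : ∀ x ∈ Icc a b, ContinuousOn (fun s => (qx x s : ℂ) + I * k * q x s) (Icc 0 t) :=
    fun x hx => (continuous_ofReal.comp_continuousOn (hcontx.uncurry_left x hx)).add
      (continuousOn_const.mul (continuous_ofReal.comp_continuousOn (hcont.uncurry_left x hx)))
      |>.mono hIcc
  have hb : b ∈ Icc a b := right_mem_Icc.mpr hab.le
  have ha : a ∈ Icc a b := left_mem_Icc.mpr hab.le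
  have hJ : ∀ x ∈ Icc a b, IntervalIntegrable
      (fun s : ℝ => cexp (σ₀ ^ 2 * k ^ 2 * s) * (qx x s + I * k * q x s)) volume 0 t :=
    fun x hx => ((Continuous.continuousOn (by fun_prop)).mul (hflux x hx)).intervalIntegrable_of_Icc
      ht.1
  have h := integral_cexp_mul_eq_of_hasDerivAt ht.1 hP
    (fun s hs => hasDerivAt_integral_cexp_mul_of_heat k hab.le ⟨hs.1, hs.2.trans_le ht.2⟩
      hcont hqx hqxx hcontxx hqt hpde)
    ((continuousOn_const.mul (((continuousOn_const.mul (hflux b hb)).sub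
      (continuousOn_const.mul (hflux a ha))))).intervalIntegrable_of_Icc ht.1)
  rw [intervalIntegral.integral_congr (g := fun s =>
      σ₀ ^ 2 * cexp (-I * k * b) * (cexp (σ₀ ^ 2 * k ^ 2 * s) * (qx b s + I * k * q b s)) -
        σ₀ ^ 2 * cexp (-I * k * a) * (cexp (σ₀ ^ 2 * k ^ 2 * s) * (qx a s + I * k * q a s)))
      fun s _ => by ring,
    intervalIntegral.integral_sub
      ((hJ b hb).const_mul _) ((hJ a ha).const_mul _),
    intervalIntegral.integral_const_mul, intervalIntegral.integral_const_mul] at h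
  simp only [ofReal_zero, mul_zero, Complex.exp_zero, one_mul] at h
  linear_combination -h

/-- the global relation for the constant-coefficient heat equation
`q_t = σ₀² q_{xx}` on `[a,b] × [0,T]`. -/
theorem stmt_13 (σ₀ a b T : ℝ) (hσ₀ : 0 < σ₀) (hab : a < b) (hT : 0 < T)
    (q qx qxx qt : ℝ → ℝ → ℝ)
    -- q is continuous on the closed rectangle
    (hcont : ContinuousOn (fun p : ℝ × ℝ => q p.1 p.2) (Set.Icc a b ×ˢ Set.Icc 0 T))
    -- q is twice continuously differentiable in x on the closed rectangle
    (hqx : ∀ x ∈ Set.Icc a b, ∀ t ∈ Set.Icc 0 T,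
      HasDerivWithinAt (fun x' => q x' t) (qx x t) (Set.Icc a b) x)
    (hqxx : ∀ x ∈ Set.Icc a b, ∀ t ∈ Set.Icc 0 T,
      HasDerivWithinAt (fun x' => qx x' t) (qxx x t) (Set.Icc a b) x)
    (hcontx : ContinuousOn (fun p : ℝ × ℝ => qx p.1 p.2) (Set.Icc a b ×ˢ Set.Icc 0 T))
    (hcontxx : ContinuousOn (fun p : ℝ × ℝ => qxx p.1 p.2) (Set.Icc a b ×ˢ Set.Icc 0 T))
    -- q is once continuously differentiable in t on the closed rectangle
    (hqt : ∀ x ∈ Set.Icc a b, ∀ t ∈ Set.Icc 0 T,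
      HasDerivWithinAt (fun t' => q x t') (qt x t) (Set.Icc 0 T) t)
    (hcontt : ContinuousOn (fun p : ℝ × ℝ => qt p.1 p.2) (Set.Icc a b ×ˢ Set.Icc 0 T))
    -- the heat equation
    (hpde : ∀ x ∈ Set.Icc a b, ∀ t ∈ Set.Icc 0 T, qt x t = σ₀ ^ 2 * qxx x t)
    (k : ℂ) (t : ℝ) (ht : t ∈ Set.Icc 0 T) :
    Complex.exp ((σ₀ : ℂ) ^ 2 * k ^ 2 * (t : ℂ)) *
        ∫ y in a..b, Complex.exp (-Complex.I * k * (y : ℂ)) * ((q y t : ℝ) : ℂ) =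
      (∫ y in a..b, Complex.exp (-Complex.I * k * (y : ℂ)) * ((q y 0 : ℝ) : ℂ)) +
        (σ₀ : ℂ) ^ 2 * Complex.exp (-Complex.I * k * (b : ℂ)) *
          (∫ s in (0 : ℝ)..t, Complex.exp ((σ₀ : ℂ) ^ 2 * k ^ 2 * (s : ℂ)) *
            (((qx b s : ℝ) : ℂ) + Complex.I * k * ((q b s : ℝ) : ℂ))) -
        (σ₀ : ℂ) ^ 2 * Complex.exp (-Complex.I * k * (a : ℂ)) *
          ∫ s in (0 : ℝ)..t, Complex.exp ((σ₀ : ℂ) ^ 2 * k ^ 2 * (s : ℂ)) *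
            (((qx a s : ℝ) : ℂ) + Complex.I * k * ((q a s : ℝ) : ℂ)) :=
  stmt_13_general σ₀ a b T hab q qx qxx qt hcont hqx hqxx hcontx hcontxx hqt hpde k t ht
end
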